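/- Let a₁⁺, a₂⁺, a₁⁻, a₂⁻ ≥ 0, σ² ≥ 0, μ ∈ ℝ, and let G⁺, G⁻ be (nonnegative Borel) measures on (0,∞) satisfying ∫ (1+t)^{−1} dG^±(t) < ∞, whose supports are contained in [m₊, ∞) and [m₋, ∞) respectively, with m₊, m₋ > 0. Then the function ψ(ξ) = (a₂⁺ ξ² − i a₁⁺ ξ) · ST(G⁺)(−iξ) + (a₂⁻ ξ² + i a₁⁻ ξ) · ST(G⁻)(iξ) + (σ²/2) ξ² − iμξ is well defined and analytic (complex-differentiable) on the open set ℂ ∖ ( i(−∞, −m₊] ∪ i[m₋, +∞) ), i.e., the characteristic exponent of a Stieltjes–Lévy process admits analytic continuation to the complex plane with two cuts along the imaginary axis. -/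

import Mathlib

open MeasureTheory Complex Set
open scoped ENNReal

/-- The Stieltjes transform `ST(G)(z) = ∫ (t + z)⁻¹ dG(t)` of a measure `G` on `(0,∞)`
(realized as a Borel measure on `ℝ`). -/
noncomputable def stieltjesTransform (G : Measure ℝ) (z : ℂ) : ℂ :=
  ∫ t : ℝ, ((t : ℂ) + z)⁻¹ ∂G

/-- The characteristic exponent of a Stieltjes–Lévy process:
`ψ(ξ) = (a₂⁺ξ² - ia₁⁺ξ)·ST(G⁺)(-iξ) + (a₂⁻ξ² + ia₁⁻ξ)·ST(G⁻)(iξ) + (σ²/2)ξ² - iμξ`. -/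
noncomputable def slPsi (a1p a2p a1m a2m sig2 μ : ℝ) (Gp Gm : Measure ℝ) (ξ : ℂ) : ℂ :=
  ((a2p : ℂ) * ξ ^ 2 - Complex.I * (a1p : ℂ) * ξ) * stieltjesTransform Gp (-Complex.I * ξ) +
    ((a2m : ℂ) * ξ ^ 2 + Complex.I * (a1m : ℂ) * ξ) * stieltjesTransform Gm (Complex.I * ξ) +
    ((sig2 / 2 : ℝ) : ℂ) * ξ ^ 2 - Complex.I * (μ : ℂ) * ξ

/-! The kernel `(t + w)⁻¹` of `ST(G)` is dominated by a constant multiple of `(1 + t)⁻¹`,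
locally uniformly in `w` off the cut `(-∞, -m]`: `|1 + t|` and `|t + w|` are the distances
from `1` and from `w` to the point `-t` of the cut, and for `w` near a point off the closed cut
the first is at most a fixed multiple of the second. Domination allows differentiation of
`ST(G)` under the integral sign, and `ψ` is assembled from `ST(G^±)(∓iξ)` by polynomial
operations, where `ξ ↦ ∓iξ` maps the complement of the two imaginary cuts off the cuts of
`ST(G^±)`. -/

theorem IsClosed.exists_ball_dist_le_mul_dist {X : Type*} [PseudoMetricSpace X] {s : Set X}
    (hs : IsClosed s) {z : X} (hz : z ∉ s) (a : X) :
    ∃ ε > 0, ∃ C > 0, ∀ w ∈ Metric.ball z ε, ∀ u ∈ s, dist a u ≤ C * dist w u := by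
  obtain ⟨δ, hδ, hball⟩ := Metric.isOpen_iff.mp hs.isOpen_compl z hz
  refine ⟨δ / 2, by positivity, (dist a z + δ) / (δ / 2), by positivity, fun w hw u hu => ?_⟩
  have hzu : δ ≤ dist u z := not_lt.mp fun h => hball (Metric.mem_ball.mpr h) hu
  have hwz : dist w z < δ / 2 := Metric.mem_ball.mp hw
  have hwu : δ / 2 ≤ dist w u := by linarith [dist_triangle u w z, dist_comm u w]
  calc dist a u ≤ dist a z + δ / 2 + dist w u := by
        linarith [dist_triangle a z w, dist_triangle a w u, dist_comm z w]
    _ ≤ (dist a z + δ / 2) / (δ / 2) * dist w u + dist w u := by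
        gcongr
        rw [div_mul_eq_mul_div, le_div_iff₀ (by positivity)]
        gcongr
    _ = (dist a z + δ) / (δ / 2) * dist w u := by field_simp; ring

theorem norm_inv_le_mul_inv_of_le_mul_norm {𝕜 : Type*} [NormedDivisionRing 𝕜] {x : 𝕜}
    {r C : ℝ} (hr : 0 < r) (hC : 0 < C) (h : r ≤ C * ‖x‖) : ‖x⁻¹‖ ≤ C * r⁻¹ := by
  rw [norm_inv, ← div_eq_mul_inv, ← inv_div]
  exact inv_anti₀ (div_pos hr hC) ((div_le_iff₀' hC).mpr h)

theorem exists_ball_one_add_le_mul_norm_ofReal_add {m : ℝ} {z : ℂ}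
    (hz : z ∉ ((↑) : ℝ → ℂ) '' Iic (-m)) :
    ∃ ε > 0, ∃ C > 0, ∀ w ∈ Metric.ball z ε, ∀ t : ℝ, m ≤ t → 1 + t ≤ C * ‖(t : ℂ) + w‖ := by
  have hcut : IsClosed (((↑) : ℝ → ℂ) '' Iic (-m)) :=
    isometry_ofReal.isClosedEmbedding.isClosedMap _ isClosed_Iic
  obtain ⟨ε, hε, C, hC, hdist⟩ := hcut.exists_ball_dist_le_mul_dist hz 1
  refine ⟨ε, hε, C, hC, fun w hw t ht => ?_⟩
  have hmem : -(t : ℂ) ∈ ((↑) : ℝ → ℂ) '' Iic (-m) := ⟨-t, by simpa using ht, by push_cast; rfl⟩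
  calc 1 + t ≤ ‖((1 + t : ℝ) : ℂ)‖ := by rw [norm_real]; exact le_abs_self _
    _ = dist 1 (-(t : ℂ)) := by rw [dist_eq_norm]; push_cast; ring_nf
    _ ≤ C * dist w (-(t : ℂ)) := hdist w hw _ hmem
    _ = C * ‖(t : ℂ) + w‖ := by rw [dist_eq_norm, sub_neg_eq_add, add_comm]

theorem integrable_inv_one_add_of_lintegral_lt_top {G : Measure ℝ} {m : ℝ} (hm : -1 < m)
    (hG : ∀ᵐ t ∂G, m ≤ t) (hfin : ∫⁻ t, ENNReal.ofReal ((1 + t)⁻¹) ∂G < ⊤) :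
    Integrable (fun t : ℝ => (1 + t)⁻¹) G := by
  refine ⟨by fun_prop, (hasFiniteIntegral_iff_ofReal ?_).mpr hfin⟩
  filter_upwards [hG] with t ht
  exact inv_nonneg.mpr (by linarith)

theorem hasDerivAt_stieltjesTransform {G : Measure ℝ} {m : ℝ} (hm : -1 < m)
    (hG : ∀ᵐ t ∂G, m ≤ t) (hint : Integrable (fun t : ℝ => (1 + t)⁻¹) G) {z : ℂ}
    (hz : z ∉ ((↑) : ℝ → ℂ) '' Iic (-m)) :
    HasDerivAt (stieltjesTransform G) (-∫ t : ℝ, (((t : ℂ) + z) ^ 2)⁻¹ ∂G) z := by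
  obtain ⟨ε, hε, C, hC, hcmp⟩ := exists_ball_one_add_le_mul_norm_ofReal_add hz
  have hkernel : ∀ᵐ t : ℝ ∂G, ∀ w ∈ Metric.ball z ε,
      0 < 1 + t ∧ (t : ℂ) + w ≠ 0 ∧ ‖((t : ℂ) + w)⁻¹‖ ≤ C * (1 + t)⁻¹ := by
    filter_upwards [hG] with t ht w hw
    have h1t : 0 < 1 + t := by linarith
    have hle := hcmp w hw t ht
    exact ⟨h1t, norm_pos_iff.mp (pos_of_mul_pos_right (h1t.trans_le hle) hC.le),
      norm_inv_le_mul_inv_of_le_mul_norm h1t hC hle⟩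
  have hF_int : Integrable (fun t : ℝ => ((t : ℂ) + z)⁻¹) G := by
    refine (hint.const_mul C).mono' (by fun_prop) ?_
    filter_upwards [hkernel] with t ht using (ht z (Metric.mem_ball_self hε)).2.2
  have h_bound : ∀ᵐ t : ℝ ∂G, ∀ w ∈ Metric.ball z ε,
      ‖-(((t : ℂ) + w) ^ 2)⁻¹‖ ≤ C ^ 2 * (1 + m)⁻¹ * (1 + t)⁻¹ := by
    filter_upwards [hG, hkernel] with t ht hker w hw
    obtain ⟨h1t, -, hle⟩ := hker w hw
    calc ‖-(((t : ℂ) + w) ^ 2)⁻¹‖ = ‖((t : ℂ) + w)⁻¹‖ ^ 2 := by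
          rw [norm_neg, ← inv_pow, norm_pow]
      _ ≤ (C * (1 + t)⁻¹) ^ 2 := by gcongr
      _ = C ^ 2 * (1 + t)⁻¹ * (1 + t)⁻¹ := by ring
      _ ≤ C ^ 2 * (1 + m)⁻¹ * (1 + t)⁻¹ := by
          gcongr
          linarith
  have h_diff : ∀ᵐ t : ℝ ∂G, ∀ w ∈ Metric.ball z ε,
      HasDerivAt (fun w : ℂ => ((t : ℂ) + w)⁻¹) (-(((t : ℂ) + w) ^ 2)⁻¹) w := by
    filter_upwards [hkernel] with t hker w hw
    exact (((hasDerivAt_id w).const_add (t : ℂ)).inv (hker w hw).2.1).congr_deriv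
      (by simp [neg_div, one_div])
  rw [← integral_neg]
  exact (hasDerivAt_integral_of_dominated_loc_of_deriv_le
    (F := fun w (t : ℝ) => ((t : ℂ) + w)⁻¹)
    (F' := fun w (t : ℝ) => -(((t : ℂ) + w) ^ 2)⁻¹) (Metric.ball_mem_nhds z hε)
    (.of_forall fun w => by fun_prop) hF_int (by fun_prop) h_bound
    (hint.const_mul _) h_diff).2

theorem slPsi_analytic_two_cuts_general
    (a1p a2p a1m a2m sig2 μ : ℝ)
    (Gp Gm : Measure ℝ)
    (hGpInt : (∫⁻ t : ℝ, ENNReal.ofReal ((1 + t)⁻¹) ∂Gp) < ⊤)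
    (hGmInt : (∫⁻ t : ℝ, ENNReal.ofReal ((1 + t)⁻¹) ∂Gm) < ⊤)
    (mP mM : ℝ) (hmP : 0 < mP) (hmM : 0 < mM)
    (hGpSupp : Gp (Set.Iio mP) = 0) (hGmSupp : Gm (Set.Iio mM) = 0) :
    IsOpen {ξ : ℂ | ¬ ∃ σ : ℝ, (σ ≤ -mP ∨ mM ≤ σ) ∧ ξ = Complex.I * (σ : ℂ)} ∧
    ∀ ξ ∈ {ξ : ℂ | ¬ ∃ σ : ℝ, (σ ≤ -mP ∨ mM ≤ σ) ∧ ξ = Complex.I * (σ : ℂ)},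
      DifferentiableAt ℂ (slPsi a1p a2p a1m a2m sig2 μ Gp Gm) ξ := by
  have hcuts : {ξ : ℂ | ¬ ∃ σ : ℝ, (σ ≤ -mP ∨ mM ≤ σ) ∧ ξ = Complex.I * (σ : ℂ)} =
      ((fun σ : ℝ => I * σ) '' (Iic (-mP) ∪ Ici mM))ᶜ := by
    ext ξ; simp [eq_comm]
  have hGp : ∀ᵐ t ∂Gp, mP ≤ t := by simpa using measure_eq_zero_iff_ae_notMem.mp hGpSupp
  have hGm : ∀ᵐ t ∂Gm, mM ≤ t := by simpa using measure_eq_zero_iff_ae_notMem.mp hGmSupp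
  refine ⟨hcuts ▸ ?_, fun ξ hξ => ?_⟩
  · exact (((Homeomorph.mulLeft₀ I I_ne_zero).isClosedEmbedding.comp
      isometry_ofReal.isClosedEmbedding).isClosedMap _ (isClosed_Iic.union isClosed_Ici)).isOpen_compl
  have hp : -I * ξ ∉ ((↑) : ℝ → ℂ) '' Iic (-mP) := by
    rintro ⟨s, hs, h⟩
    exact hξ ⟨s, .inl hs, by linear_combination (-I) * h + ξ * I_sq⟩
  have hm : I * ξ ∉ ((↑) : ℝ → ℂ) '' Iic (-mM) := by
    rintro ⟨s, hs, h⟩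
    exact hξ ⟨-s, .inr (by linarith [mem_Iic.mp hs]), by push_cast; linear_combination I * h + ξ * I_sq⟩
  have hSp := (hasDerivAt_stieltjesTransform (by linarith) hGp
    (integrable_inv_one_add_of_lintegral_lt_top (by linarith) hGp hGpInt) hp).differentiableAt
  have hSm := (hasDerivAt_stieltjesTransform (by linarith) hGm
    (integrable_inv_one_add_of_lintegral_lt_top (by linarith) hGm hGmInt) hm).differentiableAt
  unfold slPsi
  fun_prop

theorem slPsi_analytic_two_cuts
    (a1p a2p a1m a2m sig2 μ : ℝ)
    (ha1p : 0 ≤ a1p) (ha2p : 0 ≤ a2p) (ha1m : 0 ≤ a1m) (ha2m : 0 ≤ a2m)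
    (hsig2 : 0 ≤ sig2)
    (Gp Gm : Measure ℝ)
    (hGpInt : (∫⁻ t : ℝ, ENNReal.ofReal ((1 + t)⁻¹) ∂Gp) < ⊤)
    (hGmInt : (∫⁻ t : ℝ, ENNReal.ofReal ((1 + t)⁻¹) ∂Gm) < ⊤)
    (mP mM : ℝ) (hmP : 0 < mP) (hmM : 0 < mM)
    (hGpSupp : Gp (Set.Iio mP) = 0) (hGmSupp : Gm (Set.Iio mM) = 0) :
    IsOpen {ξ : ℂ | ¬ ∃ σ : ℝ, (σ ≤ -mP ∨ mM ≤ σ) ∧ ξ = Complex.I * (σ : ℂ)} ∧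
    ∀ ξ ∈ {ξ : ℂ | ¬ ∃ σ : ℝ, (σ ≤ -mP ∨ mM ≤ σ) ∧ ξ = Complex.I * (σ : ℂ)},
      DifferentiableAt ℂ (slPsi a1p a2p a1m a2m sig2 μ Gp Gm) ξ :=
  slPsi_analytic_two_cuts_general a1p a2p a1m a2m sig2 μ Gp Gm hGpInt hGmInt mP mM hmP hmM hGpSupp
    hGmSupp
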